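/- arXiv:2010.11277 — 3 statements merged into one kernel-verified Lean document; each statement's English description precedes it below -/
import Mathlib

section
/- Let R' = F₂[U,V] be the polynomial ring in two variables over F₂ = ℤ/2ℤ, let C be a finitely generated free R'-module with a distinguished basis B, and let n ≥ 1 and l ≥ 1 be integers. Let x_0, x_1, x_2, x_3, x_4 be five pairwise distinct elements of B. Then there is no R'-linear map ∂ : C → C satisfying all of the following conditions: (i) ∂∘∂ = 0; (ii) ∂x_1 − U·x_0 − V^n·x_2 ∈ UV·C; (iii) ∂x_2 − U·x_3 ∈ UV·C; (iv) ∂x_3 − V^l·x_4 ∈ UV·C; (v) ∂x_0 ∈ UV·C; (vi) for every basis element y ∈ B with y ∉ {x_1, x_2, x_3}, the coefficients [∂y : x_0], [∂y : x_1], [∂y : x_2], [∂y : x_3] all lie in the ideal generated by UV. -/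
/-!
The `x₃`-coefficient of `∂²x₁ = 0` is `∑ⱼ [∂x₁ : xⱼ] [∂xⱼ : x₃]`. Every summand with `j ≠ 2` is
divisible by `U²V`: the factor `[∂x₁ : xⱼ]` is divisible by `U` and `[∂xⱼ : x₃]` by `UV`. Hence so
is the remaining summand `[∂x₁ : x₂] [∂x₂ : x₃] ≡ Vⁿ · U mod (UV)`, which is impossible.
-/

open MvPolynomial

/-- The polynomial ring `F₂[U,V]`. -/
abbrev Rpoly : Type := MvPolynomial (Fin 2) (ZMod 2)

/-- The variable `U` of `F₂[U,V]`. -/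
noncomputable abbrev Uvar : Rpoly := X 0

/-- The variable `V` of `F₂[U,V]`. -/
noncomputable abbrev Vvar : Rpoly := X 1

theorem Module.Basis.repr_linearMap_apply {ι R M : Type*} [Semiring R] [AddCommMonoid M]
    [Module R M] (b : Module.Basis ι R M) (f : M →ₗ[R] M) (x : M) (k : ι) :
    b.repr (f x) k = (b.repr x).sum fun j c => c * b.repr (f (b j)) k := by
  conv_lhs => rw [← b.linearCombination_repr x, Finsupp.linearCombination_apply]
  simp [map_finsuppSum, Finsupp.sum_apply]

theorem Module.Basis.repr_sub_smul_self_apply {ι R M : Type*} [Ring R] [AddCommGroup M]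
    [Module R M] (b : Module.Basis ι R M) (x : M) (r : R) (i : ι) :
    b.repr (x - r • b i) i = b.repr x i - r := by
  simp

theorem Module.Basis.repr_sub_smul_apply_of_ne {ι R M : Type*} [Ring R] [AddCommGroup M]
    [Module R M] (b : Module.Basis ι R M) (x : M) (r : R) {i j : ι} (hij : i ≠ j) :
    b.repr (x - r • b i) j = b.repr x j := by
  simp [Finsupp.single_eq_of_ne' hij]

theorem Finsupp.dvd_of_sum_mul_eq_zero {ι R : Type*} [CommRing R] (v : ι →₀ R) (g : ι → R)
    {d : R} {i : ι} (h : (v.sum fun j c => c * g j) = 0) (hd : ∀ j, j ≠ i → d ∣ v j * g j) :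
    d ∣ v i * g i := by
  classical
  rw [Finsupp.sum_of_support_subset v (Finset.subset_insert i v.support) (fun j c => c * g j)
    (fun _ _ => zero_mul _), ← Finset.add_sum_erase _ _ (Finset.mem_insert_self i _),
    add_eq_zero_iff_eq_neg] at h
  rw [h, dvd_neg]
  exact Finset.dvd_sum fun j hj => hd j (Finset.ne_of_mem_erase hj)

theorem MvPolynomial.not_X_mul_X_mul_X_dvd_mul {R : Type*} [CommRing R] [Nontrivial R] {n : ℕ}
    {c g : MvPolynomial (Fin 2) R} (hc : X 0 * X 1 ∣ c - X 1 ^ n) (hg : X 0 * X 1 ∣ g - X 0) :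
    ¬ X 0 * (X 0 * X 1) ∣ c * g := by
  rintro ⟨k, hk⟩
  obtain ⟨a, ha⟩ := hc
  obtain ⟨e, he⟩ := hg
  have hcancel : (X 1 ^ n + X 0 * X 1 * a) * (1 + X 1 * e) = X 0 * X 1 * k := by
    rw [← X_mul_cancel_left_iff (i := 0)]
    linear_combination hk - g * ha - (X 1 ^ n + X 0 * X 1 * a) * he
  -- Setting `X 0 = 0` and `X 1 = T` gives `Tⁿ (1 + T q) = 0` in `R[T]`; its `Tⁿ`-coefficient is `1`.
  have := congrArg (fun p => (aeval ![0, (Polynomial.X : Polynomial R)] p).coeff n) hcancel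
  simp [Polynomial.coeff_X_pow_mul'] at this

theorem no_differential_C_one_negn_negone_negl_general
    {ι : Type*} {C : Type*} [AddCommGroup C] [Module Rpoly C]
    (b : Module.Basis ι Rpoly C) (n l : ℕ)
    (i0 i1 i2 i3 i4 : ι)
    (hdist : List.Pairwise (· ≠ ·) [i0, i1, i2, i3, i4]) :
    ¬ ∃ del : C →ₗ[Rpoly] C,
      (del ∘ₗ del = 0) ∧
      (∀ j : ι, Uvar * Vvar ∣
        b.repr (del (b i1) - Uvar • b i0 - Vvar ^ n • b i2) j) ∧
      (∀ j : ι, Uvar * Vvar ∣ b.repr (del (b i2) - Uvar • b i3) j) ∧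
      (∀ j : ι, Uvar * Vvar ∣ b.repr (del (b i3) - Vvar ^ l • b i4) j) ∧
      (∀ j : ι, Uvar * Vvar ∣ b.repr (del (b i0)) j) ∧
      (∀ y : ι, y ≠ i1 → y ≠ i2 → y ≠ i3 →
        ∀ k ∈ ({i0, i1, i2, i3} : Set ι), Uvar * Vvar ∣ b.repr (del (b y)) k) := by
  rintro ⟨del, hdel, h1, h2, h3, -, h6⟩
  obtain ⟨⟨-, e02, e03, -⟩, -, ⟨e23, -⟩, e34, -⟩ :
      (i0 ≠ i1 ∧ i0 ≠ i2 ∧ i0 ≠ i3 ∧ i0 ≠ i4) ∧ (i1 ≠ i2 ∧ i1 ≠ i3 ∧ i1 ≠ i4) ∧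
        (i2 ≠ i3 ∧ i2 ≠ i4) ∧ i3 ≠ i4 ∧ True := by
    simpa using hdist
  set c := b.repr (del (b i1))
  set g : ι → Rpoly := fun j => b.repr (del (b j)) i3
  have hsum : (c.sum fun j a => a * g j) = 0 := by
    rw [← b.repr_linearMap_apply, ← LinearMap.comp_apply, hdel]
    simp
  have hc : ∀ j, j ≠ i2 → Uvar ∣ c j := by
    intro j hj
    have h1j := (dvd_mul_right Uvar Vvar).trans (h1 j)
    rw [b.repr_sub_smul_apply_of_ne _ _ (Ne.symm hj)] at h1j
    by_cases hj0 : j = i0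
    · subst hj0
      rwa [b.repr_sub_smul_self_apply, dvd_sub_self_right] at h1j
    · rwa [b.repr_sub_smul_apply_of_ne _ _ (Ne.symm hj0)] at h1j
  have hc2 : Uvar * Vvar ∣ c i2 - Vvar ^ n := by
    simpa only [b.repr_sub_smul_self_apply, b.repr_sub_smul_apply_of_ne _ _ e02] using h1 i2
  have hg : ∀ j, j ≠ i2 → Uvar * Vvar ∣ g j := by
    intro j hj2
    by_cases hj1 : j = i1
    · simpa only [hj1, b.repr_sub_smul_apply_of_ne _ _ e23, b.repr_sub_smul_apply_of_ne _ _ e03]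
        using h1 i3
    by_cases hj3 : j = i3
    · simpa only [hj3, b.repr_sub_smul_apply_of_ne _ _ e34.symm] using h3 i3
    exact h6 j hj1 hj2 hj3 i3 (by simp)
  have hg2 : Uvar * Vvar ∣ g i2 - Uvar := by
    simpa only [b.repr_sub_smul_self_apply] using h2 i3
  exact not_X_mul_X_mul_X_dvd_mul hc2 hg2
    (c.dvd_of_sum_mul_eq_zero g hsum fun j hj => mul_dvd_mul (hc j hj) (hg j hj))

/-- Over `R' = F₂[U,V]`, a finitely generated free module `C`
with basis `B` containing five pairwise distinct elements `x_0, …, x_4`, and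
integers `n, l ≥ 1`: there is no `R'`-linear map `∂ : C → C` with `∂∘∂ = 0`,
`∂x_1 ≡ U·x_0 + V^n·x_2`, `∂x_2 ≡ U·x_3`, `∂x_3 ≡ V^l·x_4`, `∂x_0 ≡ 0`
(all congruences mod `UV·C`), and such that for every basis element
`y ∉ {x_1, x_2, x_3}` the coefficients of `x_0, x_1, x_2, x_3` in `∂y` lie in
the ideal `(UV)`. -/
theorem no_differential_C_one_negn_negone_negl
    {ι : Type*} [Fintype ι] {C : Type*} [AddCommGroup C] [Module Rpoly C]
    (b : Module.Basis ι Rpoly C) (n l : ℕ) (hn : 1 ≤ n) (hl : 1 ≤ l)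
    (i0 i1 i2 i3 i4 : ι)
    (hdist : List.Pairwise (· ≠ ·) [i0, i1, i2, i3, i4]) :
    ¬ ∃ del : C →ₗ[Rpoly] C,
      (del ∘ₗ del = 0) ∧
      (∀ j : ι, Uvar * Vvar ∣
        b.repr (del (b i1) - Uvar • b i0 - Vvar ^ n • b i2) j) ∧
      (∀ j : ι, Uvar * Vvar ∣ b.repr (del (b i2) - Uvar • b i3) j) ∧
      (∀ j : ι, Uvar * Vvar ∣ b.repr (del (b i3) - Vvar ^ l • b i4) j) ∧
      (∀ j : ι, Uvar * Vvar ∣ b.repr (del (b i0)) j) ∧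
      (∀ y : ι, y ≠ i1 → y ≠ i2 → y ≠ i3 →
        ∀ k ∈ ({i0, i1, i2, i3} : Set ι), Uvar * Vvar ∣ b.repr (del (b y)) k) :=
  no_differential_C_one_negn_negone_negl_general b n l i0 i1 i2 i3 i4 hdist
end

section
/- Let R' = F₂[U,V] be the polynomial ring in two variables over F₂ = ℤ/2ℤ, let C be a finitely generated free R'-module with a distinguished basis B, and let x_0, x_1, x_2, x_3 be four pairwise distinct elements of B. Then there is no R'-linear map ∂ : C → C satisfying all of the following conditions: (i) ∂∘∂ = 0; (ii) ∂x_1 − U·x_0 − V·x_2 ∈ UV·C; (iii) ∂x_2 − U·x_3 ∈ UV·C; (iv) ∂x_0 ∈ UV·C; (v) ∂ is reduced, i.e., for all basis elements y, b ∈ B the coefficient [∂y : b] lies in the ideal (U, V) (equivalently, has zero constant term). -/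
open MvPolynomial

/-!
Let `m = (U, V)` and `e := ∂x₁ - U x₀ - V x₂ ∈ UV·C`. Modulo `UV·m`, the `x₃`-coefficient of
`∂²x₁ = U ∂x₀ + V ∂x₂ + ∂e` is `UV`: the term `U [∂x₀ : x₃]` lies in `U·(UV)`, the term
`V [∂x₂ : x₃]` is `UV` plus an element of `V·(UV)`, and `∂e` has coefficients in `UV·m` because `∂`
is reduced. As `∂² = 0`, this puts `UV` in `UV·m`, so `1 ∈ m` after cancelling `UV`.
-/

theorem Module.Basis.repr_map_apply_mem_mul {R M N ι κ : Type*} [CommSemiring R]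
    [AddCommMonoid M] [Module R M] [AddCommMonoid N] [Module R N]
    (b : Module.Basis ι R M) (c : Module.Basis κ R N) (f : M →ₗ[R] N) {I J : Ideal R}
    (hf : ∀ y j, c.repr (f (b y)) j ∈ I) {x : M} (hx : ∀ y, b.repr x y ∈ J) (j : κ) :
    c.repr (f x) j ∈ J * I := by
  rw [← b.linearCombination_repr x, Finsupp.linearCombination_apply, map_finsuppSum,
    map_finsuppSum, Finsupp.sum_apply]
  refine Ideal.sum_mem _ fun y _ => ?_
  simp only [map_smul, Finsupp.smul_apply, smul_eq_mul]
  exact Ideal.mul_mem_mul (hx y) (hf y j)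

theorem Ideal.notMem_span_singleton_mul {R : Type*} [CommRing R] [IsDomain R] {a : R}
    (ha : a ≠ 0) {I : Ideal R} (hI : I ≠ ⊤) : a ∉ Ideal.span {a} * I := by
  rintro h
  obtain ⟨z, hz, haz⟩ := Ideal.mem_span_singleton_mul.mp h
  rw [mul_eq_left₀ ha] at haz
  exact hI ((Ideal.eq_top_iff_one I).mpr (haz ▸ hz))

theorem mul_mem_span_singleton_mul_span_pair_of_comp_self_eq_zero {R M ι : Type*}
    [CommRing R] [AddCommGroup M] [Module R M] (b : Module.Basis ι R M) {d : M →ₗ[R] M}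
    {u v : R} {i0 i1 i2 i3 : ι} (hsq : d ∘ₗ d = 0)
    (h1 : ∀ j, u * v ∣ b.repr (d (b i1) - u • b i0 - v • b i2) j)
    (h2 : u * v ∣ b.repr (d (b i2) - u • b i3) i3) (h0 : u * v ∣ b.repr (d (b i0)) i3)
    (hred : ∀ y j, b.repr (d (b y)) j ∈ Ideal.span {u, v}) :
    u * v ∈ Ideal.span {u * v} * Ideal.span {u, v} := by
  set e := d (b i1) - u • b i0 - v • b i2
  have hde : b.repr (d e) i3 ∈ Ideal.span {u * v} * Ideal.span {u, v} :=
    b.repr_map_apply_mem_mul b d hred (fun j => Ideal.mem_span_singleton.mpr (h1 j)) i3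
  have hcoeff : u * b.repr (d (b i0)) i3 + v * b.repr (d (b i2)) i3 + b.repr (d e) i3 = 0 := by
    have hd1 : d (b i1) = u • b i0 + v • b i2 + e := by simp only [e]; abel
    simpa [hd1] using congr($(LinearMap.congr_fun hsq (b i1)) |> (b.repr · i3))
  have hu : u ∈ Ideal.span {u, v} := Ideal.subset_span (by simp)
  have hv : v ∈ Ideal.span {u, v} := Ideal.subset_span (by simp)
  have h2' : u * v ∣ b.repr (d (b i2)) i3 - u := by simpa using h2
  rw [← Ideal.mem_span_singleton] at h0 h2'
  have hmem := sub_mem (sub_mem (neg_mem (Ideal.mul_mem_mul h0 hu)) (Ideal.mul_mem_mul h2' hv)) hde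
  rwa [show -(b.repr (d (b i0)) i3 * u) - (b.repr (d (b i2)) i3 - u) * v - b.repr (d e) i3
    = u * v by linear_combination -hcoeff] at hmem

theorem span_Uvar_Vvar_ne_top : Ideal.span ({Uvar, Vvar} : Set Rpoly) ≠ ⊤ := by
  intro h
  have hle : Ideal.span ({Uvar, Vvar} : Set Rpoly) ≤ RingHom.ker (constantCoeff : Rpoly →+* _) :=
    Ideal.span_le.mpr <| by simp [Set.insert_subset_iff]
  simpa using hle (h ▸ Submodule.mem_top : (1 : Rpoly) ∈ Ideal.span {Uvar, Vvar})

theorem no_reduced_differential_C_one_negone_negone_general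
    {ι : Type*} {C : Type*} [AddCommGroup C] [Module Rpoly C]
    (b : Module.Basis ι Rpoly C) (i0 i1 i2 i3 : ι) :
    ¬ ∃ del : C →ₗ[Rpoly] C,
      (del ∘ₗ del = 0) ∧
      (∀ j : ι, Uvar * Vvar ∣
        b.repr (del (b i1) - Uvar • b i0 - Vvar • b i2) j) ∧
      (∀ j : ι, Uvar * Vvar ∣ b.repr (del (b i2) - Uvar • b i3) j) ∧
      (∀ j : ι, Uvar * Vvar ∣ b.repr (del (b i0)) j) ∧
      (∀ y j : ι, b.repr (del (b y)) j ∈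
        Ideal.span ({Uvar, Vvar} : Set Rpoly)) := by
  rintro ⟨d, hsq, h1, h2, h0, hred⟩
  exact Ideal.notMem_span_singleton_mul (mul_ne_zero (X_ne_zero 0) (X_ne_zero 1))
    span_Uvar_Vvar_ne_top
    (mul_mem_span_singleton_mul_span_pair_of_comp_self_eq_zero b hsq h1 (h2 i3) (h0 i3) hred)

/-- Over `R' = F₂[U,V]`, a finitely generated free module `C`
with basis `B` containing four pairwise distinct elements `x_0, x_1, x_2, x_3`:
there is no `R'`-linear map `∂ : C → C` with `∂∘∂ = 0`,
`∂x_1 ≡ U·x_0 + V·x_2`, `∂x_2 ≡ U·x_3`, `∂x_0 ≡ 0` (mod `UV·C`), which is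
moreover reduced, i.e. every coefficient `[∂y : b]` lies in the ideal
`(U, V)`. -/
theorem no_reduced_differential_C_one_negone_negone
    {ι : Type*} [Fintype ι] {C : Type*} [AddCommGroup C] [Module Rpoly C]
    (b : Module.Basis ι Rpoly C) (i0 i1 i2 i3 : ι)
    (hdist : List.Pairwise (· ≠ ·) [i0, i1, i2, i3]) :
    ¬ ∃ del : C →ₗ[Rpoly] C,
      (del ∘ₗ del = 0) ∧
      (∀ j : ι, Uvar * Vvar ∣
        b.repr (del (b i1) - Uvar • b i0 - Vvar • b i2) j) ∧
      (∀ j : ι, Uvar * Vvar ∣ b.repr (del (b i2) - Uvar • b i3) j) ∧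
      (∀ j : ι, Uvar * Vvar ∣ b.repr (del (b i0)) j) ∧
      (∀ y j : ι, b.repr (del (b y)) j ∈
        Ideal.span ({Uvar, Vvar} : Set Rpoly)) :=
  no_reduced_differential_C_one_negone_negone_general b i0 i1 i2 i3
end

section
/- Let D be a finitely generated free module over the polynomial ring F₂[V] equipped with: a direct sum decomposition D = ⊕_{j∈ℤ} D_j into F₂-subspaces with V·D_j ⊆ D_{j−2} and with only finitely many indices j for which D_j ≠ 0 modulo the action of V (i.e., D is generated by finitely many homogeneous elements); and an F₂[V]-linear differential ∂ : D → D with ∂∘∂ = 0 and ∂(D_j) ⊆ D_{j−1}. Let H(D) = ker ∂ / im ∂, a finitely generated F₂[V]-module. Assume that the quotient of H(D) by its V-power-torsion submodule {h ∈ H(D) : V^k h = 0 for some k ≥ 0} is isomorphic to F₂[V] as an F₂[V]-module. Then the submodule (V−1)·D is preserved by ∂, and the homology of the quotient complex D/(V−1)D is a 1-dimensional vector space over F₂. -/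
open Polynomial

/-- The polynomial ring `F₂[V]` (with variable `X` playing the role of `V`). -/
abbrev RV : Type := Polynomial (ZMod 2)

set_option maxHeartbeats 2000000 in
/-- Let `D` be a finitely generated free `F₂[V]`-module with a
grading `D = ⊕_j D_j` by `F₂`-subspaces such that `V·D_j ⊆ D_{j−2}`, `D` is
generated over `F₂[V]` by homogeneous elements of finitely many degrees, and an
`F₂[V]`-linear differential `∂` with `∂∘∂ = 0` and `∂(D_j) ⊆ D_{j−1}`. If the
homology `H(D) = ker ∂ / im ∂` modulo its `V`-power-torsion submodule is
isomorphic to `F₂[V]`, then `(V−1)·D` is preserved by `∂`, and the homology of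
the quotient complex `D/(V−1)D` is a 1-dimensional `F₂`-vector space (i.e. has
exactly two elements). -/
theorem homology_mod_V_sub_one {D : Type*} [AddCommGroup D] [Module RV D]
    [Module (ZMod 2) D] [IsScalarTower (ZMod 2) RV D]
    [Module.Free RV D] [Module.Finite RV D]
    (gr : ℤ → Submodule (ZMod 2) D)
    (hinternal : DirectSum.IsInternal gr)
    (hVgr : ∀ j : ℤ, ∀ x ∈ gr j, (Polynomial.X : RV) • x ∈ gr (j - 2))
    (hfin : ∃ s : Finset ℤ,
      Submodule.span RV (⋃ j ∈ s, (gr j : Set D)) = ⊤)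
    (del : D →ₗ[RV] D)
    (hdel2 : del ∘ₗ del = 0)
    (hdelgr : ∀ j : ℤ, ∀ x ∈ gr j, del x ∈ gr (j - 1))
    (htors : Nonempty
      ((((LinearMap.ker del) ⧸
          (LinearMap.range del).comap (LinearMap.ker del).subtype) ⧸
        Submodule.torsion' RV
          ((LinearMap.ker del) ⧸
            (LinearMap.range del).comap (LinearMap.ker del).subtype)
          (Submonoid.powers (Polynomial.X : RV))) ≃ₗ[RV] RV)) :
    (∀ x ∈ (Ideal.span {(Polynomial.X : RV) - 1} • (⊤ : Submodule RV D) :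
        Submodule RV D),
      del x ∈ (Ideal.span {(Polynomial.X : RV) - 1} • (⊤ : Submodule RV D) :
        Submodule RV D)) ∧
    ∃ hp : (Ideal.span {(Polynomial.X : RV) - 1} • (⊤ : Submodule RV D) :
          Submodule RV D) ≤
        Submodule.comap del
          (Ideal.span {(Polynomial.X : RV) - 1} • (⊤ : Submodule RV D)),
      Nat.card
        (LinearMap.ker (Submodule.mapQ _ _ del hp) ⧸
          (LinearMap.range (Submodule.mapQ _ _ del hp)).comap
            (LinearMap.ker (Submodule.mapQ _ _ del hp)).subtype) = 2 := by
  classical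
  obtain ⟨e⟩ := htors
  set p : RV := Polynomial.X - 1 with hpdef
  have hp0 : p ≠ 0 := by
    have h1 : (Polynomial.X - Polynomial.C (1 : ZMod 2)) ≠ 0 := Polynomial.X_sub_C_ne_zero 1
    simpa [hpdef, Polynomial.C_1] using h1
  set N : Submodule RV D := Ideal.span {p} • (⊤ : Submodule RV D) with hNdef
  have hmemN : ∀ x : D, x ∈ N ↔ ∃ y : D, x = p • y := by
    intro x
    constructor
    · intro hx
      have hle : N ≤ LinearMap.range ((LinearMap.lsmul RV D) p) := by
        rw [hNdef]
        refine Submodule.smul_le.2 ?_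
        intro r hr m _
        obtain ⟨c, rfl⟩ := Ideal.mem_span_singleton.1 hr
        exact ⟨c • m, by simp [smul_smul, mul_comm]⟩
      obtain ⟨y, hy⟩ := hle hx
      exact ⟨y, hy.symm⟩
    · rintro ⟨y, rfl⟩
      exact Submodule.smul_mem_smul (Ideal.mem_span_singleton_self p) trivial
  have hdd : ∀ x : D, del (del x) = 0 := fun x => by
    simpa using LinearMap.ext_iff.mp hdel2 x
  have hpinj : ∀ x : D, p • x = 0 → x = 0 := fun x h =>
    (smul_eq_zero.mp h).resolve_left hp0
  have part1 : ∀ x ∈ N, del x ∈ N := by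
    intro x hx
    obtain ⟨y, rfl⟩ := (hmemN x).1 hx
    exact (hmemN _).2 ⟨del y, by simp⟩
  have hple : N ≤ Submodule.comap del N := fun x hx => part1 x hx
  refine ⟨part1, hple, ?_⟩
  -- Notation
  set Z : Submodule RV D := LinearMap.ker del with hZdef
  set B' : Submodule RV Z := (LinearMap.range del).comap Z.subtype with hB'def
  set T := Submodule.torsion' RV (Z ⧸ B') (Submonoid.powers (Polynomial.X : RV)) with hTdef
  set db : (D ⧸ N) →ₗ[RV] (D ⧸ N) := Submodule.mapQ N N del hple with hdbdef
  have hdbmk : ∀ x : D, db (Submodule.Quotient.mk x) = Submodule.Quotient.mk (del x) :=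
    fun x => Submodule.mapQ_apply N N del x
  -- every element of D ⧸ N is killed by p
  have hMp : ∀ m : D ⧸ N, p • m = 0 := by
    intro m
    obtain ⟨x, rfl⟩ := Submodule.Quotient.mk_surjective N m
    rw [← Submodule.Quotient.mk_smul, Submodule.Quotient.mk_eq_zero]
    exact (hmemN _).2 ⟨x, rfl⟩
  -- the natural map from ker del to ker db
  have hjmem : ∀ z : Z, (N.mkQ ∘ₗ Z.subtype) z ∈ LinearMap.ker db := by
    intro z
    rw [LinearMap.mem_ker]
    have : del (z : D) = 0 := z.2
    simp only [LinearMap.comp_apply, Submodule.subtype_apply, Submodule.mkQ_apply]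
    rw [hdbmk, this, Submodule.Quotient.mk_eq_zero]
    exact zero_mem N
  set jmap : Z →ₗ[RV] LinearMap.ker db :=
    LinearMap.codRestrict (LinearMap.ker db) (N.mkQ ∘ₗ Z.subtype) hjmem with hjdef
  have hjcoe : ∀ z : Z, ((jmap z : D ⧸ N)) = Submodule.Quotient.mk (z : D) := fun z => rfl
  set Bb' : Submodule RV (LinearMap.ker db) :=
    (LinearMap.range db).comap (LinearMap.ker db).subtype with hBb'def
  set phi0 : Z →ₗ[RV] ((LinearMap.ker db) ⧸ Bb') := Bb'.mkQ ∘ₗ jmap with hphi0def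
  have hBker : B' ≤ LinearMap.ker phi0 := by
    intro z hz
    obtain ⟨w, hw⟩ := hz
    rw [LinearMap.mem_ker]
    have : phi0 z = Submodule.Quotient.mk (jmap z) := rfl
    rw [this, Submodule.Quotient.mk_eq_zero]
    show jmap z ∈ Bb'
    rw [hBb'def, Submodule.mem_comap]
    refine ⟨Submodule.Quotient.mk w, ?_⟩
    rw [hdbmk w]
    show (Submodule.Quotient.mk (del w) : D ⧸ N) = Submodule.Quotient.mk (z : D)
    rw [hw]
    rfl
  set phi : (Z ⧸ B') →ₗ[RV] ((LinearMap.ker db) ⧸ Bb') := B'.liftQ phi0 hBker with hphidef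
  have hphimk : ∀ z : Z, phi (Submodule.Quotient.mk z) = Submodule.Quotient.mk (jmap z) :=
    fun z => rfl
  -- the map psi : H → RV
  set psi : (Z ⧸ B') →ₗ[RV] RV := e.toLinearMap ∘ₗ T.mkQ with hpsidef
  have hpsisurj : Function.Surjective psi :=
    e.surjective.comp (Submodule.mkQ_surjective T)
  have hkerpsi : ∀ h : Z ⧸ B', psi h = 0 ↔ h ∈ T := by
    intro h
    have h0 : psi h = e (Submodule.Quotient.mk h) := rfl
    rw [h0, map_eq_zero_iff _ e.injective, Submodule.Quotient.mk_eq_zero]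
  -- torsion elements are divisible by p
  have hTdiv : ∀ h : Z ⧸ B', h ∈ T → ∃ y : Z ⧸ B', h = p • y := by
    intro h ht
    rw [hTdef, Submodule.mem_torsion'_iff] at ht
    obtain ⟨⟨a, k, rfl⟩, hak⟩ := ht
    have hak' : (Polynomial.X : RV) ^ k • h = 0 := hak
    refine ⟨-((∑ i ∈ Finset.range k, (Polynomial.X : RV) ^ i) • h), ?_⟩
    have hg : p * (∑ i ∈ Finset.range k, (Polynomial.X : RV) ^ i) =
        (Polynomial.X : RV) ^ k - 1 := by
      rw [mul_comm, hpdef]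
      exact geom_sum_mul (Polynomial.X : RV) k
    rw [smul_neg, smul_smul, hg, sub_smul, one_smul, hak', zero_sub, neg_neg]
  -- H has no p-torsion
  have hHpinj : ∀ h : Z ⧸ B', p • h = 0 → h = 0 := by
    intro h hph
    have h1 : psi h = 0 := by
      have h2 : p * psi h = 0 := by
        rw [← smul_eq_mul, ← map_smul, hph, map_zero]
      exact (mul_eq_zero.mp h2).resolve_left hp0
    have h2 : h ∈ T := (hkerpsi h).mp h1
    rw [hTdef, Submodule.mem_torsion'_iff] at h2
    obtain ⟨⟨a, k, rfl⟩, hak⟩ := h2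
    have hak' : (Polynomial.X : RV) ^ k • h = 0 := hak
    have hone : ((Polynomial.X : RV) ^ k -
        (∑ i ∈ Finset.range k, (Polynomial.X : RV) ^ i) * p) • h = h := by
      have : (∑ i ∈ Finset.range k, (Polynomial.X : RV) ^ i) * p =
          (Polynomial.X : RV) ^ k - 1 := by
        rw [hpdef]; exact geom_sum_mul (Polynomial.X : RV) k
      rw [this]; ring_nf; rw [one_smul]
    calc h = ((Polynomial.X : RV) ^ k -
        (∑ i ∈ Finset.range k, (Polynomial.X : RV) ^ i) * p) • h := hone.symm
      _ = (Polynomial.X : RV) ^ k • h -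
          (∑ i ∈ Finset.range k, (Polynomial.X : RV) ^ i) • (p • h) := by
          rw [sub_smul, smul_smul]
      _ = 0 := by rw [hak', hph, smul_zero, sub_zero]
  -- kernel characterizations
  have hker1 : ∀ h : Z ⧸ B', phi h = 0 → ∃ y : Z ⧸ B', h = p • y := by
    intro h hh
    obtain ⟨z, rfl⟩ := Submodule.Quotient.mk_surjective B' h
    rw [hphimk z, Submodule.Quotient.mk_eq_zero, hBb'def, Submodule.mem_comap] at hh
    obtain ⟨m, hm⟩ := hh
    obtain ⟨u, rfl⟩ := Submodule.Quotient.mk_surjective N m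
    rw [hdbmk u] at hm
    have hm' : ((Submodule.Quotient.mk (del u) : D ⧸ N)) =
        Submodule.Quotient.mk (z : D) := hm
    rw [Submodule.Quotient.eq] at hm'
    obtain ⟨v, hv⟩ := (hmemN _).1 hm'
    have hz2 : del (z : D) = 0 := z.2
    have hdv : del v = 0 := by
      apply hpinj
      rw [← map_smul, ← hv, map_sub, hdd u, hz2, sub_zero]
    have hnv : -v ∈ Z := by
      show del (-v) = 0
      rw [map_neg, hdv, neg_zero]
    refine ⟨Submodule.Quotient.mk (⟨-v, hnv⟩ : Z), ?_⟩
    rw [← Submodule.Quotient.mk_smul, Submodule.Quotient.eq]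
    refine Submodule.mem_comap.mpr ⟨u, ?_⟩
    have hc : Z.subtype (z - p • (⟨-v, hnv⟩ : Z)) = (z : D) + p • v := by
      simp [smul_neg, sub_neg_eq_add]
    rw [hc, ← sub_add_cancel (del u) (z : D), hv]
    abel
  have hker2 : ∀ h : Z ⧸ B', (∃ y : Z ⧸ B', h = p • y) → phi h = 0 := by
    rintro h ⟨y, rfl⟩
    obtain ⟨zy, rfl⟩ := Submodule.Quotient.mk_surjective B' y
    rw [← Submodule.Quotient.mk_smul, hphimk]
    have hj0 : jmap (p • zy) = 0 := by
      apply Subtype.ext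
      show ((jmap (p • zy) : D ⧸ N)) = 0
      rw [hjcoe, Submodule.coe_smul, Submodule.Quotient.mk_smul]
      exact hMp _
    rw [hj0, Submodule.Quotient.mk_eq_zero]
    exact zero_mem _
  -- chi : H → RV ⧸ span {p}
  set chi : (Z ⧸ B') →ₗ[RV] (RV ⧸ Ideal.span {p}) := (Ideal.span {p}).mkQ ∘ₗ psi
    with hchidef
  have hchisurj : Function.Surjective chi :=
    (Submodule.mkQ_surjective _).comp hpsisurj
  have hchi0 : ∀ h : Z ⧸ B', chi h = 0 ↔ p ∣ psi h := by
    intro h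
    rw [hchidef]
    simp only [LinearMap.comp_apply, Submodule.mkQ_apply]
    rw [Submodule.Quotient.mk_eq_zero]
    exact Ideal.mem_span_singleton
  have hker3 : ∀ h : Z ⧸ B', chi h = 0 → ∃ y : Z ⧸ B', h = p • y := by
    intro h hh
    obtain ⟨q, hq⟩ := (hchi0 h).1 hh
    obtain ⟨h1, hh1⟩ := hpsisurj q
    have : psi (h - p • h1) = 0 := by
      rw [map_sub, map_smul, hh1, hq, smul_eq_mul, sub_self]
    have hmem : h - p • h1 ∈ T := (hkerpsi _).1 this
    obtain ⟨s, hs⟩ := hTdiv _ hmem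
    exact ⟨h1 + s, by rw [smul_add, ← hs]; abel⟩
  have hker4 : ∀ h : Z ⧸ B', (∃ y : Z ⧸ B', h = p • y) → chi h = 0 := by
    rintro h ⟨y, rfl⟩
    rw [(hchi0 _)]
    rw [map_smul, smul_eq_mul]
    exact Dvd.intro _ rfl
  have hkereq : LinearMap.ker phi = LinearMap.ker chi := by
    ext h
    simp only [LinearMap.mem_ker]
    exact ⟨fun hh => hker4 h (hker1 h hh), fun hh => hker2 h (hker3 h hh)⟩
  -- phi is surjective
  have hphisurj : Function.Surjective phi := by
    intro m
    obtain ⟨zb, rfl⟩ := Submodule.Quotient.mk_surjective Bb' m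
    obtain ⟨x, hx⟩ := Submodule.Quotient.mk_surjective N (zb : D ⧸ N)
    have hdx : del x ∈ N := by
      rw [← Submodule.Quotient.mk_eq_zero, ← hdbmk x, hx]
      exact zb.2
    obtain ⟨y, hy⟩ := (hmemN _).1 hdx
    have hdy : del y = 0 := by
      apply hpinj
      rw [← map_smul, ← hy, hdd]
    have hyZ : y ∈ Z := hdy
    have hyB : (⟨y, hyZ⟩ : Z) ∈ B' := by
      have h0 : (Submodule.Quotient.mk (⟨y, hyZ⟩ : Z) : Z ⧸ B') = 0 := by
        apply hHpinj
        rw [← Submodule.Quotient.mk_smul, Submodule.Quotient.mk_eq_zero]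
        refine ⟨x, ?_⟩
        show del x = ((p • (⟨y, hyZ⟩ : Z) : Z) : D)
        rw [Submodule.coe_smul, hy]
      rwa [Submodule.Quotient.mk_eq_zero] at h0
    obtain ⟨w, hw⟩ := hyB
    have hw' : del w = y := hw
    have hxZ : x - p • w ∈ Z := by
      show del (x - p • w) = 0
      rw [map_sub, map_smul, hw', hy, sub_self]
    refine ⟨Submodule.Quotient.mk (⟨x - p • w, hxZ⟩ : Z), ?_⟩
    rw [hphimk]
    congr 1
    apply Subtype.ext
    show ((Submodule.Quotient.mk (x - p • w) : D ⧸ N)) = (zb : D ⧸ N)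
    rw [← hx, Submodule.Quotient.eq]
    refine (hmemN _).2 ⟨-w, ?_⟩
    rw [smul_neg]
    abel
  -- conclude
  have e1 : ((Z ⧸ B') ⧸ LinearMap.ker phi) ≃ₗ[RV] ((LinearMap.ker db) ⧸ Bb') :=
    phi.quotKerEquivOfSurjective hphisurj
  have e2 : ((Z ⧸ B') ⧸ LinearMap.ker chi) ≃ₗ[RV] (RV ⧸ Ideal.span {p}) :=
    chi.quotKerEquivOfSurjective hchisurj
  rw [hkereq] at e1
  have e3 : ((LinearMap.ker db) ⧸ Bb') ≃ (RV ⧸ Ideal.span {p}) :=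
    (e1.symm.trans e2).toEquiv
  have hps : ({Polynomial.X - Polynomial.C (1 : ZMod 2)} : Set RV) = {p} := by
    rw [hpdef, Polynomial.C_1]
  have e4 : (RV ⧸ Ideal.span {p}) ≃ ZMod 2 := by
    have h := Polynomial.quotientSpanXSubCAlgEquiv (1 : ZMod 2)
    rw [hps] at h
    exact h.toEquiv
  calc Nat.card ((LinearMap.ker db) ⧸ Bb') = Nat.card (RV ⧸ Ideal.span {p}) :=
        Nat.card_congr e3
    _ = Nat.card (ZMod 2) := Nat.card_congr e4
    _ = 2 := Nat.card_zmod 2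
end
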